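/- Let k ∈ ℕ, n ∈ ℕ₀, and let integers v_λ be given for λ ∈ B(k,n) := {λ ∈ B_0(n) : |λ| ≤ k}. If Σ_{λ∈B(k,n)} v_λ·m_{λ,n}(s,t)·P_λ(s,t) belongs to the ideal I_k of ℤ[s,t], then there exist N ∈ ℕ₀ and polynomials q_1, q_2 ∈ ℤ[x,y] such that (x·y)^N·Σ_{λ∈B(k,n)} v_λ·Q_λ(x,y) = q_1(x,y)·Q_{(k+1,0)}(x,y) + q_2(x,y)·Q_{(k+2,0)}(x,y) in ℤ[x,y]. -/
import Mathlib


open MvPolynomial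

noncomputable section

abbrev Rxy : Type := MvPolynomial (Fin 2) ℤ

/-- The fraction field of ℤ[x,y]. -/
abbrev Kxy : Type := FractionRing Rxy

/-- The image of `x` in the fraction field. -/
noncomputable def xx : Kxy := algebraMap Rxy Kxy (X 0)

/-- The image of `y` in the fraction field. -/
noncomputable def yy : Kxy := algebraMap Rxy Kxy (X 1)

/-- `s = x / y²`. -/
noncomputable def sv : Kxy := xx / yy ^ 2

/-- `t = y / x²`. -/
noncomputable def tv : Kxy := yy / xx ^ 2

/-- Evaluation of a two-variable integer polynomial at `(s, t)` in the fraction field. -/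
noncomputable def evST (p : Rxy) : Kxy := aeval ![sv, tv] p

/-- Defining properties of the SU(3) character polynomials `Q a b`
(with the convention `Q a b = 0` whenever `(a, b) ∉ ℕ₀²`). -/
def IsQSU3 (Q : ℤ → ℤ → Rxy) : Prop :=
  (∀ a b : ℤ, (a < 0 ∨ b < 0) → Q a b = 0) ∧
  Q 0 0 = 1 ∧
  Q 1 0 = X 0 ∧
  (∀ a b : ℤ, 0 ≤ a → 0 ≤ b →
    X 0 * Q a b = Q (a + 1) b + Q a (b - 1) + Q (a - 1) (b + 1)) ∧
  (∀ a b : ℤ, rename (Equiv.swap (0 : Fin 2) 1) (Q a b) = Q b a)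

/-- Defining property of the polynomials `P a b` (in the variables `s, t`), namely
`P_λ(x/y², y/x²) = x^{-λ₁} y^{-λ₂} Q_λ(x,y)` in the fraction field of ℤ[x,y]
(with the convention `P a b = 0` whenever `(a, b) ∉ ℕ₀²`). -/
def IsPSU3 (Q P : ℤ → ℤ → Rxy) : Prop :=
  (∀ a b : ℤ, (a < 0 ∨ b < 0) → P a b = 0) ∧
  (∀ a b : ℤ, 0 ≤ a → 0 ≤ b →
    evST (P a b) = algebraMap Rxy Kxy (Q a b) / (xx ^ a * yy ^ b))

/-- Membership of `p` in the set `B_j(n)` (for `j = 0, 1`). -/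
def Bmem (j n : ℕ) (p : ℕ × ℕ) : Prop :=
  ((p.1 : ℤ) - j ≡ (p.2 : ℤ) [ZMOD 3]) ∧
  (p.1 : ℤ) - j + 2 * p.2 ≤ 3 * n ∧
  2 * ((p.1 : ℤ) - j) + p.2 ≤ 3 * n

/-- Defining property of the monomials `m_{λ,n}(s,t)`: for `λ ∈ B_j(n)` (`j = 0, 1`),
`m j λ n` is the element of ℤ[s,t] corresponding to `x^{λ₁-j-n} y^{λ₂-n}` under the
change of variables `s = x/y²`, `t = y/x²`. -/
def IsMono (m : ℕ → ℕ × ℕ → ℕ → Rxy) : Prop :=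
  ∀ j n (p : ℕ × ℕ), j ≤ 1 → Bmem j n p →
    evST (m j p n) = xx ^ ((p.1 : ℤ) - j - n) * yy ^ ((p.2 : ℤ) - n)


set_option synthInstance.maxHeartbeats 1000000 in
set_option maxHeartbeats 2000000 in
lemma my_xx_ne : (xx : Kxy) ≠ 0 := by
  simp only [xx, ne_eq, map_eq_zero_iff _ (IsFractionRing.injective Rxy Kxy)]
  exact X_ne_zero 0

set_option synthInstance.maxHeartbeats 1000000 in
set_option maxHeartbeats 2000000 in
lemma my_yy_ne : (yy : Kxy) ≠ 0 := by
  simp only [yy, ne_eq, map_eq_zero_iff _ (IsFractionRing.injective Rxy Kxy)]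
  exact X_ne_zero 1

set_option synthInstance.maxHeartbeats 1000000 in
set_option maxHeartbeats 2000000 in
lemma my_algxy : algebraMap Rxy Kxy (X 0 * X 1) = xx * yy := by
  simp [xx, yy]

set_option synthInstance.maxHeartbeats 1000000 in
set_option maxHeartbeats 2000000 in
lemma my_evST_add (p q : Rxy) : evST (p + q) = evST p + evST q := map_add (aeval ![sv, tv]) p q

set_option synthInstance.maxHeartbeats 1000000 in
set_option maxHeartbeats 2000000 in
lemma my_evST_mul (p q : Rxy) : evST (p * q) = evST p * evST q := map_mul (aeval ![sv, tv]) p q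

set_option synthInstance.maxHeartbeats 1000000 in
set_option maxHeartbeats 2000000 in
lemma my_evST_X0 : evST (X 0) = sv := by simp [evST]

set_option synthInstance.maxHeartbeats 1000000 in
set_option maxHeartbeats 2000000 in
lemma my_evST_X1 : evST (X 1) = tv := by simp [evST]

set_option synthInstance.maxHeartbeats 1000000 in
set_option maxHeartbeats 2000000 in
lemma my_clearDen (p : Rxy) : ∃ (M : ℕ) (f : Rxy),
    (xx * yy) ^ M * evST p = algebraMap Rxy Kxy f := by
  induction p using MvPolynomial.induction_on with
  | C a =>
    refine ⟨0, C a, ?_⟩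
    simp [evST, MvPolynomial.algebraMap_eq]
  | add p q hp hq =>
    obtain ⟨M1, f1, h1⟩ := hp
    obtain ⟨M2, f2, h2⟩ := hq
    refine ⟨M1 + M2, (X 0 * X 1) ^ M2 * f1 + (X 0 * X 1) ^ M1 * f2, ?_⟩
    rw [my_evST_add, map_add, map_mul, map_mul, map_pow, map_pow, my_algxy, ← h1, ← h2]
    ring
  | mul_X p i hp =>
    obtain ⟨M, f, h⟩ := hp
    fin_cases i
    · refine ⟨M + 2, f * X 0 ^ 3, ?_⟩
      show (xx * yy) ^ (M + 2) * evST (p * X 0) = _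
      rw [my_evST_mul, my_evST_X0, map_mul, map_pow,
        show algebraMap Rxy Kxy (X 0) = xx from rfl, ← h, sv]
      field_simp [my_xx_ne, my_yy_ne]
      ring
    · refine ⟨M + 2, f * X 1 ^ 3, ?_⟩
      show (xx * yy) ^ (M + 2) * evST (p * X 1) = _
      rw [my_evST_mul, my_evST_X1, map_mul, map_pow,
        show algebraMap Rxy Kxy (X 1) = yy from rfl, ← h, tv]
      field_simp [my_xx_ne, my_yy_ne]
      ring

set_option synthInstance.maxHeartbeats 1000000 in
set_option maxHeartbeats 2000000 in
lemma my_zkey (a b : ℤ) (n : ℕ) (c : Kxy) :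
    (xx * yy) ^ n * (xx ^ (a - 0 - n) * yy ^ (b - n) * (c / (xx ^ a * yy ^ b))) = c := by
  have hx := my_xx_ne
  have hy := my_yy_ne
  have e1 : xx ^ (n : ℤ) * xx ^ (a - 0 - n) * xx ^ (-a) = 1 := by
    rw [← zpow_add₀ hx, ← zpow_add₀ hx, show (n : ℤ) + (a - 0 - n) + -a = 0 by ring, zpow_zero]
  have e2 : yy ^ (n : ℤ) * yy ^ (b - n) * yy ^ (-b) = 1 := by
    rw [← zpow_add₀ hy, ← zpow_add₀ hy, show (n : ℤ) + (b - n) + -b = 0 by ring, zpow_zero]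
  have h1 : (xx * yy) ^ n = xx ^ (n : ℤ) * yy ^ (n : ℤ) := by
    rw [mul_pow, zpow_natCast, zpow_natCast]
  calc (xx * yy) ^ n * (xx ^ (a - 0 - n) * yy ^ (b - n) * (c / (xx ^ a * yy ^ b)))
      = (xx ^ (n : ℤ) * xx ^ (a - 0 - n) * xx ^ (-a)) *
          (yy ^ (n : ℤ) * yy ^ (b - n) * yy ^ (-b)) * c := by
        rw [h1, div_eq_mul_inv, mul_inv, ← zpow_neg, ← zpow_neg]; ring
    _ = c := by rw [e1, e2]; ring

set_option synthInstance.maxHeartbeats 1000000 in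
set_option maxHeartbeats 4000000 in
theorem stmt_10 (Q P : ℤ → ℤ → Rxy) (hQ : IsQSU3 Q) (hP : IsPSU3 Q P)
    (m : ℕ → ℕ × ℕ → ℕ → Rxy) (hm : IsMono m)
    (k n : ℕ) (hk : 1 ≤ k)
    (v : ℕ × ℕ → ℤ)
    (hv : ∀ p : ℕ × ℕ, v p ≠ 0 → Bmem 0 n p ∧ p.1 + p.2 ≤ k)
    (hmem : ∑ p ∈ Finset.range (k + 1) ×ˢ Finset.range (k + 1),
        v p • (m 0 p n * P (p.1 : ℤ) (p.2 : ℤ)) ∈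
      Ideal.span ({P ((k : ℤ) + 1) 0, P ((k : ℤ) + 2) 0} : Set Rxy)) :
    ∃ (N : ℕ) (q1 q2 : Rxy),
      (X 0 * X 1 : Rxy) ^ N *
          ∑ p ∈ Finset.range (k + 1) ×ˢ Finset.range (k + 1), v p • Q (p.1 : ℤ) (p.2 : ℤ) =
        q1 * Q ((k : ℤ) + 1) 0 + q2 * Q ((k : ℤ) + 2) 0 := by
  classical
  have inj := IsFractionRing.injective Rxy Kxy
  obtain ⟨a, b, hab⟩ := Ideal.mem_span_pair.mp hmem
  obtain ⟨Ma, fa, hfa⟩ := my_clearDen a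
  obtain ⟨Mb, fb, hfb⟩ := my_clearDen b
  set F := Finset.range (k + 1) ×ˢ Finset.range (k + 1) with hF
  have hSum : (xx * yy) ^ n * evST (∑ p ∈ F, v p • (m 0 p n * P (p.1 : ℤ) (p.2 : ℤ)))
      = ∑ p ∈ F, v p • algebraMap Rxy Kxy (Q (p.1 : ℤ) (p.2 : ℤ)) := by
    rw [show evST (∑ p ∈ F, v p • (m 0 p n * P (p.1 : ℤ) (p.2 : ℤ)))
        = ∑ p ∈ F, evST (v p • (m 0 p n * P (p.1 : ℤ) (p.2 : ℤ))) from
          map_sum (aeval ![sv, tv]) _ _, Finset.mul_sum]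
    refine Finset.sum_congr rfl fun p hp => ?_
    by_cases hvp : v p = 0
    · simp [hvp, evST]
    · obtain ⟨hB, -⟩ := hv p hvp
      have hmP := hm 0 n p (by norm_num) hB
      have hPp := hP.2 (p.1 : ℤ) (p.2 : ℤ) (Int.natCast_nonneg _) (Int.natCast_nonneg _)
      have e : evST (v p • (m 0 p n * P (p.1 : ℤ) (p.2 : ℤ)))
          = v p • (evST (m 0 p n) * evST (P (p.1 : ℤ) (p.2 : ℤ))) := by
        simp [evST]
      rw [e, hmP, hPp, mul_smul_comm]
      congr 1
      simpa using my_zkey (p.1 : ℤ) (p.2 : ℤ) n _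
  have hevS : evST (∑ p ∈ F, v p • (m 0 p n * P (p.1 : ℤ) (p.2 : ℤ)))
      = evST a * (algebraMap Rxy Kxy (Q ((k : ℤ) + 1) 0) / xx ^ ((k : ℤ) + 1))
        + evST b * (algebraMap Rxy Kxy (Q ((k : ℤ) + 2) 0) / xx ^ ((k : ℤ) + 2)) := by
    rw [← hab]
    have e : evST (a * P ((k : ℤ) + 1) 0 + b * P ((k : ℤ) + 2) 0)
        = evST a * evST (P ((k : ℤ) + 1) 0) + evST b * evST (P ((k : ℤ) + 2) 0) := by
      simp [evST]
    rw [e, hP.2 ((k : ℤ) + 1) 0 (by positivity) le_rfl,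
      hP.2 ((k : ℤ) + 2) 0 (by positivity) le_rfl]
    norm_num
  refine ⟨Ma + Mb + k + 2, fa * X 0 ^ (n + Mb + 1) * X 1 ^ (n + Mb + k + 2),
    fb * X 0 ^ (n + Ma) * X 1 ^ (n + Ma + k + 2), inj ?_⟩
  have hmapsum : algebraMap Rxy Kxy (∑ p ∈ F, v p • Q (p.1 : ℤ) (p.2 : ℤ))
      = ∑ p ∈ F, v p • algebraMap Rxy Kxy (Q (p.1 : ℤ) (p.2 : ℤ)) := by
    rw [map_sum]
    exact Finset.sum_congr rfl fun p _ => map_zsmul _ _ _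
  rw [map_mul, map_pow, my_algxy, hmapsum, ← hSum, hevS, map_add, map_mul, map_mul, map_mul,
    map_mul, map_mul, map_mul, map_pow, map_pow, map_pow, map_pow,
    show algebraMap Rxy Kxy (X 0) = xx from rfl, show algebraMap Rxy Kxy (X 1) = yy from rfl,
    ← hfa, ← hfb]
  rw [show ((k : ℤ) + 1) = ((k + 1 : ℕ) : ℤ) by push_cast; ring,
    show ((k : ℤ) + 2) = ((k + 2 : ℕ) : ℤ) by push_cast; ring, zpow_natCast, zpow_natCast]
  field_simp [my_xx_ne, my_yy_ne]
  ring
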